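/- Let Λ be a string algebra and let v be a vertex of its quiver. The set H_r(v) of strings u with t(u) = v and ε(u) = 1, equipped with the relation u <_r v defined by: (1) v = u a x for an arrow a and string x, or (2) u = v B y for an arrow b and string y, or (3) v = z a x and u = z B y for arrows a, b and strings x, y, z — is a total (linear) order. -/

import Mathlib

/-- A quiver with a set of monomial relations, presenting a string algebra. -/
structure SAQuiver where
  V : Type
  A : Type
  src : A → V
  tgt : A → V
  rel : Set (List A)

namespace SA

variable (S : SAQuiver)

/-- A syllable: a direct arrow (`Sum.inl`) or the formal inverse of an arrow (`Sum.inr`). -/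
abbrev Syl := S.A ⊕ S.A

/-- A word of syllables, listed in order of traversal (the head is the first,
i.e. rightmost, syllable in the usual right-to-left notation `αₙ…α₁`). -/
abbrev Word := List (Syl S)

def sylSrc : Syl S → S.V
  | Sum.inl a => S.src a
  | Sum.inr a => S.tgt a

def sylTgt : Syl S → S.V
  | Sum.inl a => S.tgt a
  | Sum.inr a => S.src a

def sylInv : Syl S → Syl S
  | Sum.inl a => Sum.inr a
  | Sum.inr a => Sum.inl a

/-- Consecutive syllables compose as a walk. -/
def IsWalk : Word S → Prop
  | [] => True
  | [_] => True
  | x :: y :: l => sylTgt S x = sylSrc S y ∧ IsWalk (y :: l)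

/-- No two consecutive syllables are inverse to each other. -/
def Reduced : Word S → Prop
  | x :: y :: l => y ≠ sylInv S x ∧ Reduced (y :: l)
  | _ => True

/-- No subword is a relation or the inverse of a relation. -/
def AvoidsRel (w : Word S) : Prop :=
  ∀ p ∈ S.rel, ¬ ((p.map (Sum.inl : S.A → Syl S)) <:+: w) ∧
    ¬ ((p.map (Sum.inr : S.A → Syl S)).reverse <:+: w)

/-- A (finite, nonempty) string. -/
def IsStr (w : Word S) : Prop :=
  w ≠ [] ∧ IsWalk S w ∧ Reduced S w ∧ AvoidsRel S w

def wSrc : Word S → Option S.V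
  | [] => none
  | x :: _ => some (sylSrc S x)

def wTgt (w : Word S) : Option S.V := w.getLast?.map (sylTgt S)

/-- A cyclic word: its target equals its source. -/
def Cyclic (w : Word S) : Prop := w ≠ [] ∧ wSrc S w = wTgt S w

/-- The `n`-th power of a word under concatenation. -/
def pow (w : Word S) (n : ℕ) : Word S := (List.replicate n w).flatten

/-- A word containing both a direct and an inverse syllable. -/
def Mixed (w : Word S) : Prop := (∃ a, Sum.inl a ∈ w) ∧ (∃ a, Sum.inr a ∈ w)

/-- A word that is not a proper power of a shorter word. -/
def Primitive (w : Word S) : Prop := ¬ ∃ (u : Word S) (k : ℕ), 2 ≤ k ∧ w = pow S u k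

/-- A rotation (cyclic permutation) of a word. -/
def IsRotation (u w : Word S) : Prop := ∃ l₁ l₂ : Word S, w = l₁ ++ l₂ ∧ u = l₂ ++ l₁

/-- A band: a primitive mixed cyclic string, all of whose powers are strings, whose first
syllable is inverse and whose last syllable is direct. -/
def IsBand (w : Word S) : Prop :=
  IsStr S w ∧ Cyclic S w ∧ Primitive S w ∧
    (∃ a, w.head? = some (Sum.inr a)) ∧ (∃ a, w.getLast? = some (Sum.inl a)) ∧
    ∀ n : ℕ, 1 ≤ n → IsStr S (pow S w n)

/-- A cyclic permutation of a band. -/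
def RotOfBand (u : Word S) : Prop := ∃ b, IsBand S b ∧ IsRotation S u b

/-- A prime band: no cyclic permutation of it is a concatenation of two or more cyclic
permutations of bands. -/
def IsPrimeBand (w : Word S) : Prop :=
  IsBand S w ∧
    ¬ ∃ (w' : Word S) (parts : List (Word S)), IsRotation S w' w ∧ 2 ≤ parts.length ∧
        w' = parts.flatten ∧ ∀ p ∈ parts, RotOfBand S p

/-- A word containing no cyclic permutation of a band as a subword. -/
def BandFree (w : Word S) : Prop := ¬ ∃ u, RotOfBand S u ∧ u <:+: w

/-- A word all of whose syllables are direct. -/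
def DirectWord (w : Word S) : Prop := ∀ x ∈ w, ∃ a, x = Sum.inl a

/-- A word all of whose syllables are inverse. -/
def InverseWord (w : Word S) : Prop := ∀ x ∈ w, ∃ a, x = Sum.inr a

/-- A string which is a substring of a cyclic permutation of a band. -/
def Extendable (w : Word S) : Prop := ∃ u, RotOfBand S u ∧ w <:+: u

/-- The axioms for `(Q, ρ)` to present a string algebra. -/
def IsStringAlgebra : Prop :=
  Finite S.V ∧ Finite S.A ∧
  (∀ p ∈ S.rel, p ≠ [] ∧ IsWalk S (p.map (Sum.inl : S.A → Syl S))) ∧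
  {p : List S.A | p ≠ [] ∧ IsWalk S (p.map (Sum.inl : S.A → Syl S)) ∧
      ∀ q ∈ S.rel, ¬ (q <:+: p)}.Finite ∧
  (∀ v : S.V, ¬ ∃ a b c : S.A, a ≠ b ∧ b ≠ c ∧ a ≠ c ∧
      S.src a = v ∧ S.src b = v ∧ S.src c = v) ∧
  (∀ v : S.V, ¬ ∃ a b c : S.A, a ≠ b ∧ b ≠ c ∧ a ≠ c ∧
      S.tgt a = v ∧ S.tgt b = v ∧ S.tgt c = v) ∧
  (∀ b c₁ c₂ : S.A, c₁ ≠ c₂ → IsStr S [Sum.inl b, Sum.inl c₁] →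
      ¬ IsStr S [Sum.inl b, Sum.inl c₂]) ∧
  (∀ b a₁ a₂ : S.A, a₁ ≠ a₂ → IsStr S [Sum.inl a₁, Sum.inl b] →
      ¬ IsStr S [Sum.inl a₂, Sum.inl b])

end SA

namespace SA

variable (S : SAQuiver)

/-! ### Sign functions and hammocks -/

/-- `σ` of a syllable: `σ(a) = σ a`, `σ(B) = ε b`. -/
def sylSg (σ ε : S.A → ℤ) : Syl S → ℤ
  | Sum.inl a => σ a
  | Sum.inr a => ε a

/-- `ε` of a syllable: `ε(a) = ε a`, `ε(B) = σ b`. -/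
def sylEp (σ ε : S.A → ℤ) : Syl S → ℤ
  | Sum.inl a => ε a
  | Sum.inr a => σ a

/-- The conditions on the chosen sign maps `σ, ε : Q₁ → {±1}`. -/
def SignOK (σ ε : S.A → ℤ) : Prop :=
  (∀ a, σ a = 1 ∨ σ a = -1) ∧ (∀ a, ε a = 1 ∨ ε a = -1) ∧
  (∀ a b, a ≠ b → S.src a = S.src b → σ a = -σ b) ∧
  (∀ a b, a ≠ b → S.tgt a = S.tgt b → ε a = -ε b) ∧
  (∀ c b : S.A, IsStr S [Sum.inl c, Sum.inl b] → σ b = -ε c)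

/-- Membership in the hammock `H_r(v)`: strings ending at `v` with `ε`-value `1`;
the empty word stands for the lazy string `1_{(v,1)}`. -/
def HrMem (σ ε : S.A → ℤ) (v : S.V) (w : Word S) : Prop :=
  w = [] ∨ (IsStr S w ∧ wTgt S w = some v ∧
    ∃ s, w.getLast? = some s ∧ sylEp S σ ε s = 1)

/-- The order `<_r` on `H_r(v)`:  `u <_r v` iff `v = u a x`, or `u = v B y`, or
`v = z a x ∧ u = z B y`. -/
def ltr (u v : Word S) : Prop :=
  (∃ (a : S.A) (x : Word S), v = x ++ [Sum.inl a] ++ u) ∨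
  (∃ (b : S.A) (y : Word S), u = y ++ [Sum.inr b] ++ v) ∨
  (∃ (a b : S.A) (x y z : Word S),
      v = x ++ [Sum.inl a] ++ z ∧ u = y ++ [Sum.inr b] ++ z)

/-- The inverse of a word. -/
def wInv (w : Word S) : Word S := (w.map (sylInv S)).reverse

/-- Membership in the hammock `H_l(v)`: strings starting at `v` with `σ`-value `-1`;
the empty word stands for the lazy string `1_{(v,-1)}`'s role in `H_l(v)`. -/
def HlMem (σ ε : S.A → ℤ) (v : S.V) (w : Word S) : Prop :=
  w = [] ∨ (IsStr S w ∧ wSrc S w = some v ∧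
    ∃ s, w.head? = some s ∧ sylSg S σ ε s = -1)

/-- The order `<_l` on `H_l(v)`: `u <_l v` iff `v⁻¹ <_r u⁻¹`. -/
def ltl (u v : Word S) : Prop := ltr S (wInv S v) (wInv S u)

/-- `v` is the direct successor of `u` in the total order `lt` restricted to `P`. -/
def DirSucc (P : Word S → Prop) (lt : Word S → Word S → Prop) (u v : Word S) : Prop :=
  P u ∧ P v ∧ lt u v ∧ ¬ ∃ w, P w ∧ lt u w ∧ lt w v

/-- A finite interval (chain of consecutive elements) in a hammock whose length sequence is
monotone. -/
def MonoChain (P : Word S → Prop) (lt : Word S → Word S → Prop) (n : ℕ)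
    (c : ℕ → Word S) : Prop :=
  (∀ i < n, DirSucc S P lt (c i) (c (i + 1))) ∧
  ((∀ i < n, (c i).length < (c (i + 1)).length) ∨
   (∀ i < n, (c (i + 1)).length < (c i).length))

/-- Torsion-freeness for one hammock: every finite interval with monotone length sequence
extends (on one of its two ends) to a strictly larger such interval. -/
def TFfor (P : Word S → Prop) (lt : Word S → Word S → Prop) : Prop :=
  ∀ (n : ℕ) (c : ℕ → Word S), MonoChain S P lt n c →
    ∃ c' : ℕ → Word S, MonoChain S P lt (n + 1) c' ∧
      ((∀ i ≤ n, c' i = c i) ∨ (∀ i ≤ n, c' (i + 1) = c i))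

/-- A torsion-free string algebra: both the left and right hammock conditions hold at
every vertex. -/
def TorsionFree (σ ε : S.A → ℤ) : Prop :=
  (∀ v : S.V, TFfor S (HrMem S σ ε v) (ltr S)) ∧
  (∀ v : S.V, TFfor S (HlMem S σ ε v) (ltl S))

/-! ### Bridges and the bridge quiver -/

/-- A weak bridge `b₁ → b₂`: a band-free string `u` (possibly of length zero) such that
`b₂ u b₁` is a string. -/
def IsWeakBridge (b₁ u b₂ : Word S) : Prop :=
  IsPrimeBand S b₁ ∧ IsPrimeBand S b₂ ∧ BandFree S u ∧ IsStr S (b₁ ++ u ++ b₂)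

/-- A bridge: a weak bridge which does not factor through another prime band. -/
def IsBridge (b₁ u b₂ : Word S) : Prop :=
  IsWeakBridge S b₁ u b₂ ∧
  ¬ ∃ (bb u₁ u₂ : Word S), IsPrimeBand S bb ∧ IsWeakBridge S b₁ u₁ bb ∧
      IsWeakBridge S bb u₂ b₂ ∧
      ((u = u₁ ++ u₂ ∧ u₁ ≠ [] ∧ u₂ ≠ []) ∨
       (∃ u₁' u₂' u₁'' u₂'' : Word S, u = u₁' ++ u₂' ∧ u₁' ≠ [] ∧ u₂' ≠ [] ∧
          u₁ = u₁' ++ u₁'' ∧ u₂ = u₂'' ++ u₂' ∧ bb = u₁'' ++ u₂''))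

/-- `R` is a set of representatives of the prime bands up to cyclic permutation. -/
def RepSet (R : Set (Word S)) : Prop :=
  (∀ r ∈ R, IsPrimeBand S r) ∧
  ∀ b, IsPrimeBand S b → ∃! r, r ∈ R ∧ IsRotation S b r

/-- One arrow of the bridge quiver with vertex set `R`. -/
def Step (R : Set (Word S)) (x y : Word S) : Prop :=
  x ∈ R ∧ y ∈ R ∧ ∃ u, IsBridge S x u y

/-- Reachability by a directed path in the bridge quiver. -/
def Reach (R : Set (Word S)) : Word S → Word S → Prop :=
  Relation.ReflTransGen (Step S R)

/-- Adjacency (in either direction) in the bridge quiver. -/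
def Adj (R : Set (Word S)) (x y : Word S) : Prop := Step S R x y ∨ Step S R y x

/-- Lying in the same connected component of the bridge quiver. -/
def SameComp (R : Set (Word S)) : Word S → Word S → Prop :=
  Relation.ReflTransGen (Adj S R)

/-- `x` lies on a meta-band, i.e. on a directed cycle of positive length in the bridge
quiver. -/
def OnMetaBand (R : Set (Word S)) (x : Word S) : Prop :=
  (∃ u, IsBridge S x u x ∧ u ≠ []) ∨
  (∃ y, y ≠ x ∧ y ∈ R ∧ Reach S R x y ∧ Reach S R y x)

/-- A meta-`⋃`-cyclic string algebra: each connected component of the bridge quiver has at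
least two vertices and is a union of meta-bands (every vertex and every arrow lies on a
directed cycle of positive length). -/
def MetaUCyclic (R : Set (Word S)) : Prop :=
  (∀ x ∈ R, ∃ y ∈ R, y ≠ x ∧ SameComp S R x y) ∧
  (∀ x ∈ R, OnMetaBand S R x) ∧
  (∀ x y u, x ∈ R → y ∈ R → IsBridge S x u y → Reach S R y x)

/-- A meta-torsion-free string algebra: each connected component of the bridge quiver has
at least two vertices, and every finite directed path of positive length extends to a
`ℤ`-indexed directed path. -/
def MetaTorsionFree (R : Set (Word S)) : Prop :=
  (∀ x ∈ R, ∃ y ∈ R, y ≠ x ∧ SameComp S R x y) ∧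
  (∀ (n : ℕ) (c e : ℕ → Word S), 0 < n → (∀ i ≤ n, c i ∈ R) →
    (∀ i < n, IsBridge S (c i) (e i) (c (i + 1))) →
    ∃ (g d : ℤ → Word S), (∀ i : ℤ, g i ∈ R) ∧
      (∀ i : ℤ, IsBridge S (g i) (d i) (g (i + 1))) ∧
      (∀ i : ℕ, i ≤ n → g (i : ℤ) = c i) ∧ (∀ i : ℕ, i < n → d (i : ℤ) = e i))

/-- A non-domestic string algebra: one with infinitely many bands. -/
def NonDomestic : Prop := ¬ {b : Word S | IsBand S b}.Finite

end SA

/-! Read from its end and closed off by an end marker, a word becomes a key, and `<_r` is the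
lexicographic order of keys for the ranking "inverse syllable < end < direct syllable"; it is a
strict order because the ranking is. Two distinct words are then incomparable only if, after a
common end `z`, they continue with distinct syllables of the same direction. In `H_r(v)` this
cannot happen: for empty `z` the two arrows share their target (or source) and both have sign
`1`, while otherwise they violate, together with the first syllable of `z`, one of the axioms
of a string algebra. -/

namespace List

variable {α : Type*} {r : α → α → Prop}

theorem Lex.eq_append_cons_or_exists {l₁ l₂ : List α} (h : Lex r l₁ l₂) :
    (∃ a t, l₂ = l₁ ++ a :: t) ∨
      ∃ z x y t₁ t₂, r x y ∧ l₁ = z ++ x :: t₁ ∧ l₂ = z ++ y :: t₂ := by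
  induction h with
  | nil => exact .inl ⟨_, _, rfl⟩
  | rel hab => exact .inr ⟨[], _, _, _, _, hab, rfl, rfl⟩
  | @cons a _ _ _ ih =>
    rcases ih with ⟨b, t, rfl⟩ | ⟨z, x, y, t₁, t₂, hxy, rfl, rfl⟩
    · exact .inl ⟨b, t, rfl⟩
    · exact .inr ⟨a :: z, x, y, t₁, t₂, hxy, rfl, rfl⟩

theorem eq_or_lex_or_lex_or_exists_incomparable :
    ∀ l₁ l₂ : List α, l₁ = l₂ ∨ Lex r l₁ l₂ ∨ Lex r l₂ l₁ ∨
      ∃ z x y t₁ t₂, x ≠ y ∧ ¬ r x y ∧ ¬ r y x ∧ l₁ = z ++ x :: t₁ ∧ l₂ = z ++ y :: t₂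
  | [], [] => .inl rfl
  | [], _ :: _ => .inr (.inl .nil)
  | _ :: _, [] => .inr (.inr (.inl .nil))
  | a :: l₁, b :: l₂ => by
    by_cases hab : r a b
    · exact .inr (.inl (.rel hab))
    by_cases hba : r b a
    · exact .inr (.inr (.inl (.rel hba)))
    by_cases heq : a = b
    · subst heq
      rcases eq_or_lex_or_lex_or_exists_incomparable l₁ l₂ with
        rfl | h | h | ⟨z, x, y, t₁, t₂, hne, hxy, hyx, rfl, rfl⟩
      · exact .inl rfl
      · exact .inr (.inl h.cons)
      · exact .inr (.inr (.inl h.cons))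
      · exact .inr (.inr (.inr ⟨a :: z, x, y, t₁, t₂, hne, hxy, hyx, rfl, rfl⟩))
    · exact .inr (.inr (.inr ⟨[], a, b, l₁, l₂, heq, hab, hba, rfl, rfl⟩))

theorem map_some_append_none_eq_append_cons {l : List α} {z t : List (Option α)}
    {x : Option α} (h : l.map some ++ [none] = z ++ x :: t) :
    (x = none ∧ z = l.map some ∧ t = []) ∨
      ∃ s l₁ l₂, x = some s ∧ l = l₁ ++ s :: l₂ ∧ z = l₁.map some := by
  induction z generalizing l with
  | nil =>
    cases l with
    | nil => simp_all
    | cons s l => simp_all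
  | cons c z ih =>
    cases l with
    | nil => simp at h
    | cons s l =>
      simp only [map_cons, cons_append, cons.injEq] at h
      obtain ⟨rfl, h⟩ := h
      rcases ih h with ⟨rfl, rfl, rfl⟩ | ⟨s', l₁, l₂, rfl, rfl, rfl⟩
      · exact .inl ⟨rfl, rfl, rfl⟩
      · exact .inr ⟨s', s :: l₁, l₂, rfl, rfl, rfl⟩

end List

namespace SA

variable {S : SAQuiver}

/-- `none` marks the end of a word. -/
def keyRank : Option (Syl S) → ℕ
  | some (Sum.inr _) => 0
  | none => 1
  | some (Sum.inl _) => 2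

def rKey (u : Word S) : List (Option (Syl S)) := u.reverse.map some ++ [none]

theorem rKey_injective : Function.Injective (rKey (S := S)) := fun _ _ h =>
  List.reverse_injective <| (Option.some_injective _).list_map (List.append_cancel_right h)

theorem rKey_eq_append_cons {u : Word S} {z t : List (Option (Syl S))} {x : Option (Syl S)}
    (h : rKey u = z ++ x :: t) :
    (x = none ∧ z = u.reverse.map some ∧ t = []) ∨
      ∃ s p q, x = some s ∧ u = q ++ s :: p ∧ z = p.reverse.map some := by
  rcases List.map_some_append_none_eq_append_cons h with h | ⟨s, l₁, l₂, rfl, hu, rfl⟩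
  · exact .inl h
  · refine .inr ⟨s, l₁.reverse, l₂.reverse, rfl, ?_, by simp⟩
    simpa using congrArg List.reverse hu

theorem ltr_iff_lex {u u' : Word S} :
    ltr S u u' ↔ List.Lex (fun x y => keyRank x < keyRank y) (rKey u) (rKey u') := by
  constructor
  · rintro (⟨a, x, rfl⟩ | ⟨b, y, rfl⟩ | ⟨a, b, x, y, z, rfl, rfl⟩) <;>
      simpa [rKey] using List.Lex.append_left _ (.rel (by simp [keyRank])) _
  · intro h
    rcases h.eq_append_cons_or_exists with ⟨a, t, h⟩ | ⟨z, x, y, t₁, t₂, hxy, h₁, h₂⟩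
    · have h' : rKey u' = u.reverse.map some ++ none :: a :: t := by rw [h]; simp [rKey]
      rcases rKey_eq_append_cons h' with ⟨-, -, h⟩ | ⟨s, -, -, h, -⟩ <;> simp at h
    rcases rKey_eq_append_cons h₁ with ⟨rfl, rfl, -⟩ | ⟨b, p, q, rfl, rfl, rfl⟩ <;>
      rcases rKey_eq_append_cons h₂ with ⟨rfl, hz, -⟩ | ⟨a, p', q', rfl, rfl, hz⟩
    · simp [keyRank] at hxy
    · obtain rfl : u = p' := (Option.some_injective _).list_map (by simpa using hz)
      obtain ⟨a⟩ | ⟨a⟩ := a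
      · exact .inl ⟨a, q', by simp⟩
      · simp [keyRank] at hxy
    · obtain rfl : p = u' := (Option.some_injective _).list_map (by simpa using hz)
      obtain ⟨b⟩ | ⟨b⟩ := b
      · simp [keyRank] at hxy
      · exact .inr (.inl ⟨b, q, by simp⟩)
    · obtain rfl : p = p' := (Option.some_injective _).list_map (by simpa using hz)
      obtain ⟨b⟩ | ⟨b⟩ := b <;> obtain ⟨a⟩ | ⟨a⟩ := a <;> simp only [keyRank] at hxy <;> try omega
      exact .inr (.inr ⟨a, b, q', q, p, by simp, by simp⟩)

theorem ltr_trans {u u' u'' : Word S} (h₁ : ltr S u u') (h₂ : ltr S u' u'') :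
    ltr S u u'' := by
  rw [ltr_iff_lex] at *
  exact List.lex_trans Nat.lt_trans h₁ h₂

theorem ltr_irrefl (u : Word S) : ¬ ltr S u u := by
  rw [ltr_iff_lex]
  exact List.lex_irrefl (fun x => Nat.lt_irrefl (keyRank x)) _

theorem isWalk_iff_isChain :
    ∀ w : Word S, IsWalk S w ↔ w.IsChain (fun x y => sylTgt S x = sylSrc S y)
  | [] | [_] => by simp [IsWalk]
  | x :: y :: l => by
    rw [List.isChain_cons_cons, ← isWalk_iff_isChain (y :: l)]
    rfl

theorem reduced_iff_isChain :
    ∀ w : Word S, Reduced S w ↔ w.IsChain (fun x y => y ≠ sylInv S x)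
  | [] | [_] => by simp [Reduced]
  | x :: y :: l => by
    rw [List.isChain_cons_cons, ← reduced_iff_isChain (y :: l)]
    rfl

@[simp]
theorem sylInv_sylInv (x : Syl S) : sylInv S (sylInv S x) = x := by
  cases x <;> rfl

@[simp]
theorem wInv_wInv (w : Word S) : wInv S (wInv S w) = w := by
  simp [wInv, Function.comp_def]

theorem wInv_infix_wInv {l w : Word S} (h : l <:+: w) : wInv S l <:+: wInv S w :=
  (h.map _).reverse

theorem AvoidsRel.wInv {w : Word S} (hw : AvoidsRel S w) : AvoidsRel S (wInv S w) := by
  intro p hp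
  have hinl : SA.wInv S (p.map Sum.inl) = (p.map Sum.inr).reverse := by
    simp [SA.wInv, Function.comp_def, sylInv]
  refine ⟨fun h => (hw p hp).2 ?_, fun h => (hw p hp).1 ?_⟩
  · simpa [hinl] using wInv_infix_wInv h
  · simpa [← hinl] using wInv_infix_wInv h

theorem IsStr.wInv {w : Word S} (hw : IsStr S w) : IsStr S (wInv S w) := by
  obtain ⟨hne, hwalk, hred, havoid⟩ := hw
  refine ⟨by simpa [SA.wInv] using hne, ?_, ?_, havoid.wInv⟩
  · rw [isWalk_iff_isChain] at hwalk ⊢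
    simp only [SA.wInv, List.isChain_reverse, List.isChain_map]
    refine hwalk.imp fun x y h => ?_
    cases x <;> cases y <;> exact h.symm
  · rw [reduced_iff_isChain] at hred ⊢
    simp only [SA.wInv, List.isChain_reverse, List.isChain_map]
    refine hred.imp fun x y h => ?_
    exact fun e => h (by rw [e, sylInv_sylInv])

theorem IsStr.infix {w l : Word S} (hw : IsStr S w) (h : l <:+: w) (hne : l ≠ []) :
    IsStr S l := by
  obtain ⟨-, hwalk, hred, havoid⟩ := hw
  refine ⟨hne, ?_, ?_, fun p hp => ⟨fun hc => (havoid p hp).1 (hc.trans h),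
    fun hc => (havoid p hp).2 (hc.trans h)⟩⟩
  · exact (isWalk_iff_isChain l).2 (((isWalk_iff_isChain w).1 hwalk).infix h)
  · exact (reduced_iff_isChain l).2 (((reduced_iff_isChain w).1 hred).infix h)

section
variable {x y : Syl S} {l : Word S}

theorem IsStr.sylTgt_eq_sylSrc (hw : IsStr S (x :: y :: l)) : sylTgt S x = sylSrc S y :=
  hw.2.1.1

theorem IsStr.ne_sylInv (hw : IsStr S (x :: y :: l)) : y ≠ sylInv S x :=
  hw.2.2.1.1

theorem IsStr.pair (hw : IsStr S (x :: y :: l)) : IsStr S [x, y] :=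
  hw.infix ⟨[], l, rfl⟩ (by simp)

end

section
variable {a b c : S.A}

theorem IsStringAlgebra.eq_of_src_eq (hSA : IsStringAlgebra S) (hac : a ≠ c) (hbc : b ≠ c)
    (ha : S.src a = S.src c) (hb : S.src b = S.src c) : a = b := by
  by_contra hab
  exact hSA.2.2.2.2.1 _ ⟨a, b, c, hab, hbc, hac, ha, hb, rfl⟩

theorem IsStringAlgebra.eq_of_tgt_eq (hSA : IsStringAlgebra S) (hac : a ≠ c) (hbc : b ≠ c)
    (ha : S.tgt a = S.tgt c) (hb : S.tgt b = S.tgt c) : a = b := by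
  by_contra hab
  exact hSA.2.2.2.2.2.1 _ ⟨a, b, c, hab, hbc, hac, ha, hb, rfl⟩

theorem IsStringAlgebra.eq_of_isStr_left (hSA : IsStringAlgebra S)
    (ha : IsStr S [Sum.inl a, Sum.inl c]) (hb : IsStr S [Sum.inl b, Sum.inl c]) : a = b := by
  by_contra hab
  exact hSA.2.2.2.2.2.2.2 c a b hab ha hb

theorem IsStringAlgebra.eq_of_isStr_right (hSA : IsStringAlgebra S)
    (ha : IsStr S [Sum.inl c, Sum.inl a]) (hb : IsStr S [Sum.inl c, Sum.inl b]) : a = b := by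
  by_contra hab
  exact hSA.2.2.2.2.2.2.1 c a b hab ha hb

variable {σ ε : S.A → ℤ}

theorem SignOK.eq_of_src_eq (hσε : SignOK S σ ε) (h : S.src a = S.src b) (ha : σ a = 1)
    (hb : σ b = 1) : a = b := by
  by_contra hab
  have := hσε.2.2.1 a b hab h
  omega

theorem SignOK.eq_of_tgt_eq (hσε : SignOK S σ ε) (h : S.tgt a = S.tgt b) (ha : ε a = 1)
    (hb : ε b = 1) : a = b := by
  by_contra hab
  have := hσε.2.2.2.1 a b hab h
  omega

end

section
variable {σ ε : S.A → ℤ} {v : S.V}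

theorem HrMem.suffix {u l : Word S} (hu : HrMem S σ ε v u) (h : l <:+ u) :
    HrMem S σ ε v l := by
  rcases eq_or_ne l [] with rfl | hne
  · exact .inl rfl
  obtain ⟨t, rfl⟩ := h
  obtain h | ⟨hstr, htgt, s, hlast, hs⟩ := hu
  · simp_all
  have hlast' : (t ++ l).getLast? = l.getLast? := List.getLast?_append_of_ne_nil t hne
  refine .inr ⟨hstr.infix (List.suffix_append t l).isInfix hne, ?_, s, hlast' ▸ hlast, hs⟩
  simpa [wTgt, hlast'] using htgt

theorem HrMem.isStr {s : Syl S} {z : Word S} (h : HrMem S σ ε v (s :: z)) :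
    IsStr S (s :: z) :=
  (h.resolve_left (List.cons_ne_nil s z)).1

theorem HrMem.singleton {s : Syl S} (h : HrMem S σ ε v [s]) :
    sylTgt S s = v ∧ sylEp S σ ε s = 1 := by
  obtain ⟨-, htgt, s', hlast, hs⟩ := h.resolve_left (List.cons_ne_nil s [])
  obtain rfl : s = s' := by simpa using hlast
  exact ⟨by simpa [wTgt] using htgt, hs⟩

theorem HrMem.eq_of_inl_cons (hSA : IsStringAlgebra S) (hσε : SignOK S σ ε) {a b : S.A}
    {z : Word S} (ha : HrMem S σ ε v (Sum.inl a :: z)) (hb : HrMem S σ ε v (Sum.inl b :: z)) :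
    a = b := by
  obtain _ | ⟨c | c, z⟩ := z
  · obtain ⟨hta, hεa⟩ := ha.singleton
    obtain ⟨htb, hεb⟩ := hb.singleton
    exact hσε.eq_of_tgt_eq (hta.trans htb.symm) hεa hεb
  · exact hSA.eq_of_isStr_left ha.isStr.pair hb.isStr.pair
  · have hac : a ≠ c := fun h => ha.isStr.ne_sylInv (by rw [h]; rfl)
    have hbc : b ≠ c := fun h => hb.isStr.ne_sylInv (by rw [h]; rfl)
    exact hSA.eq_of_tgt_eq hac hbc ha.isStr.sylTgt_eq_sylSrc hb.isStr.sylTgt_eq_sylSrc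

theorem HrMem.eq_of_inr_cons (hSA : IsStringAlgebra S) (hσε : SignOK S σ ε) {a b : S.A}
    {z : Word S} (ha : HrMem S σ ε v (Sum.inr a :: z)) (hb : HrMem S σ ε v (Sum.inr b :: z)) :
    a = b := by
  obtain _ | ⟨c | c, z⟩ := z
  · obtain ⟨hsa, hσa⟩ := ha.singleton
    obtain ⟨hsb, hσb⟩ := hb.singleton
    exact hσε.eq_of_src_eq (hsa.trans hsb.symm) hσa hσb
  · have hac : a ≠ c := fun h => ha.isStr.ne_sylInv (by rw [h]; rfl)
    have hbc : b ≠ c := fun h => hb.isStr.ne_sylInv (by rw [h]; rfl)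
    exact hSA.eq_of_src_eq hac hbc ha.isStr.sylTgt_eq_sylSrc hb.isStr.sylTgt_eq_sylSrc
  · exact hSA.eq_of_isStr_right ha.isStr.pair.wInv hb.isStr.pair.wInv

theorem HrMem.eq_of_cons_of_rank_eq (hSA : IsStringAlgebra S) (hσε : SignOK S σ ε)
    {s s' : Syl S} {z : Word S} (hs : HrMem S σ ε v (s :: z)) (hs' : HrMem S σ ε v (s' :: z))
    (hrank : keyRank (some s) = keyRank (some s')) : s = s' := by
  obtain a | a := s <;> obtain b | b := s' <;> simp only [keyRank] at hrank <;> try omega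
  · rw [hs.eq_of_inl_cons hSA hσε hs']
  · rw [hs.eq_of_inr_cons hSA hσε hs']

end

theorem ltr_total {σ ε : S.A → ℤ} {v : S.V} (hSA : IsStringAlgebra S) (hσε : SignOK S σ ε)
    {u u' : Word S} (hu : HrMem S σ ε v u) (hu' : HrMem S σ ε v u') (hne : u ≠ u') :
    ltr S u u' ∨ ltr S u' u := by
  simp only [ltr_iff_lex]
  rcases List.eq_or_lex_or_lex_or_exists_incomparable (rKey u) (rKey u') with
    h | h | h | ⟨z, x, y, t, t', hxy, hnxy, hnyx, hx, hy⟩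
  · exact absurd (rKey_injective h) hne
  · exact .inl h
  · exact .inr h
  exfalso
  have hrank : keyRank x = keyRank y := by omega
  rcases rKey_eq_append_cons hx with ⟨rfl, rfl, -⟩ | ⟨s, p, q, rfl, rfl, rfl⟩ <;>
    rcases rKey_eq_append_cons hy with ⟨rfl, hz, -⟩ | ⟨s', p', q', rfl, rfl, hz⟩
  · exact hxy rfl
  · cases s' <;> simp [keyRank] at hrank
  · cases s <;> simp [keyRank] at hrank
  obtain rfl : p = p' := List.reverse_injective ((Option.some_injective _).list_map hz)
  exact hxy <| congrArg some <| (hu.suffix (List.suffix_append q _)).eq_of_cons_of_rank_eq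
    hSA hσε (hu'.suffix (List.suffix_append q' _)) hrank

end SA

open SA in
/-- The hammock `H_r(v)` with the relation `<_r` is a total (linear) order: `<_r` is
transitive, irreflexive, and any two distinct elements are comparable. -/
theorem hammock_Hr_total_order (S : SAQuiver) (hSA : SA.IsStringAlgebra S)
    (σ ε : S.A → ℤ) (hσε : SignOK S σ ε) (v : S.V) :
    (∀ u u' u'' : Word S, HrMem S σ ε v u → HrMem S σ ε v u' → HrMem S σ ε v u'' →
        ltr S u u' → ltr S u' u'' → ltr S u u'') ∧
    (∀ u : Word S, HrMem S σ ε v u → ¬ ltr S u u) ∧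
    (∀ u u' : Word S, HrMem S σ ε v u → HrMem S σ ε v u' → u ≠ u' →
        (ltr S u u' ∨ ltr S u' u)) :=
  ⟨fun _ _ _ _ _ _ => ltr_trans, fun u _ => ltr_irrefl u,
    fun _ _ hu hu' => ltr_total hSA hσε hu hu'⟩
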